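/- Let R = k[x₁, ..., xₙ] be a polynomial ring over a field k, let w₂, ..., wₙ be positive integers, and let I = (x₁x₂^{w₂}, x₂x₃^{w₃}, ..., x_{n-1}xₙ^{wₙ}). Suppose for some i with 1 < i < n-1 that wᵢ ≥ 2 and w_{i+1} = 1. Then the monomial f = x_{i-1} xᵢ^{wᵢ} x_{i+1}² x_{i+2}^{w_{i+2}} does not belong to I³. -/

import Mathlib

/-!
I is a monomial ideal, so it is enough to weight the variables so that every generator of I has
weight at least `D` while `f` has weight below `3D`: every monomial of `I³` then has weight at
least `3D`. Writing `f = x_{i-1} x_i^a x_{i+1}^2 x_{i+2}^c`, take the weights `0, c, (a-1)c, 1` on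
`x_{i-1}, …, x_{i+2}` and `D = ac` on every other variable. Then every generator has weight at least
`ac`, but `f` has weight `3ac - c`.
-/

open MvPolynomial

namespace MvPolynomial

variable {σ R : Type*} [CommSemiring R]

noncomputable def weightIdeal (φ : (σ →₀ ℕ) →+ ℕ) (d : ℕ) : Ideal (MvPolynomial σ R) :=
  Ideal.span ((fun s => monomial s 1) '' {s | d ≤ φ s})

variable (φ : (σ →₀ ℕ) →+ ℕ)

theorem weightIdeal_mul_le (a b : ℕ) :
    weightIdeal (R := R) φ a * weightIdeal φ b ≤ weightIdeal φ (a + b) := by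
  rw [weightIdeal, weightIdeal, Ideal.span_mul_span']
  refine Ideal.span_mono ?_
  rintro _ ⟨_, ⟨s, hs, rfl⟩, _, ⟨t, ht, rfl⟩, rfl⟩
  exact ⟨s + t, by simp only [Set.mem_ofPred_eq, map_add] at *; omega,
    by simp only [monomial_mul, one_mul]⟩

theorem weightIdeal_pow_le (d : ℕ) :
    ∀ k : ℕ, weightIdeal (R := R) φ d ^ k ≤ weightIdeal φ (k * d)
  | 0 => by
    rw [pow_zero, zero_mul, Ideal.one_eq_top, top_le_iff, Ideal.eq_top_iff_one]
    exact Ideal.subset_span ⟨0, Nat.zero_le _, by simp⟩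
  | k + 1 => by
    rw [pow_succ, add_mul, one_mul]
    exact (Ideal.mul_mono_left (weightIdeal_pow_le d k)).trans (weightIdeal_mul_le φ _ _)

theorem monomial_mem_weightIdeal_iff [Nontrivial R] {d : ℕ} {e : σ →₀ ℕ} :
    monomial e (1 : R) ∈ weightIdeal φ d ↔ d ≤ φ e := by
  classical
  refine ⟨fun h => ?_, fun h => Ideal.subset_span ⟨e, h, rfl⟩⟩
  obtain ⟨s, hs, hse⟩ := mem_ideal_span_monomial_image.mp h e
    (by rw [support_monomial, if_neg one_ne_zero]; exact Finset.mem_singleton_self e)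
  calc d ≤ φ s := hs
    _ ≤ φ s + φ (e - s) := Nat.le_add_right _ _
    _ = φ e := by rw [← map_add, add_tsub_cancel_of_le hse]

theorem monomial_notMem_span_pow_of_weight [Nontrivial R] {G : Set (MvPolynomial σ R)} {d k : ℕ}
    (hG : ∀ g ∈ G, ∃ s, d ≤ φ s ∧ g = monomial s 1) {e : σ →₀ ℕ} (he : φ e < k * d) :
    monomial e (1 : R) ∉ Ideal.span G ^ k := by
  have hspan : Ideal.span G ≤ weightIdeal φ d := Ideal.span_le.mpr fun g hg => by
    obtain ⟨s, hs, rfl⟩ := hG g hg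
    exact Ideal.subset_span ⟨s, hs, rfl⟩
  intro h
  have := (monomial_mem_weightIdeal_iff φ).mp
    (weightIdeal_pow_le φ d k (Ideal.pow_right_mono hspan k h))
  omega

theorem X_mul_X_pow_eq_monomial (a b : σ) (p : ℕ) :
    (X a * X b ^ p : MvPolynomial σ R) =
      monomial (Finsupp.single a 1 + Finsupp.single b p) 1 := by
  rw [X_pow_eq_monomial, X, monomial_mul, one_mul]

end MvPolynomial

/-- Variables are indexed from `0`: `f` lives on `X m, …, X (m + 3)`. -/
def separatingWeight (w : ℕ → ℕ) (m t : ℕ) : ℕ :=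
  if t = m then 0
  else if t = m + 1 then w (m + 4)
  else if t = m + 2 then (w (m + 2) - 1) * w (m + 4)
  else if t = m + 3 then 1
  else w (m + 2) * w (m + 4)

theorem le_separatingWeight_generator (w : ℕ → ℕ) (m : ℕ) {j : ℕ} (hj : 1 ≤ j)
    (hwj : 1 ≤ w (j + 1)) :
    w (m + 2) * w (m + 4) ≤
      separatingWeight w m (j - 1) + w (j + 1) * separatingWeight w m j := by
  have hac : w (m + 2) * w (m + 4) ≤ (w (m + 2) - 1) * w (m + 4) + w (m + 4) := by
    rw [Nat.sub_one_mul]; omega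
  obtain rfl | rfl | rfl | rfl | ⟨h0, h1, h2, h3⟩ : j = m + 1 ∨ j = m + 2 ∨ j = m + 3 ∨ j = m + 4 ∨
      (j - 1 ≠ m ∧ j - 1 ≠ m + 1 ∧ j - 1 ≠ m + 2 ∧ j - 1 ≠ m + 3) := by omega
  · simp [separatingWeight]
  · simpa [separatingWeight, add_comm] using
      hac.trans (Nat.add_le_add_right (Nat.le_mul_of_pos_left _ hwj) _)
  · simpa [separatingWeight] using hac
  · simpa [separatingWeight] using (Nat.le_mul_of_pos_left _ hwj).trans (Nat.le_add_left _ 1)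
  · simp [separatingWeight, h0, h1, h2, h3]

theorem separatingWeight_lt (w : ℕ → ℕ) (m : ℕ) (ha : 1 ≤ w (m + 2)) (hc : 1 ≤ w (m + 4)) :
    separatingWeight w m m + w (m + 2) * separatingWeight w m (m + 1) +
        2 * separatingWeight w m (m + 2) + w (m + 4) * separatingWeight w m (m + 3) <
      3 * (w (m + 2) * w (m + 4)) := by
  obtain ⟨a, ha'⟩ : ∃ a, w (m + 2) = a + 1 := ⟨_, (Nat.succ_pred_eq_of_pos ha).symm⟩
  simp [separatingWeight, ha']
  nlinarith

/-- Let `R = k[x₁, …, xₙ]` (the variable `xₜ` is `X ⟨t-1,_⟩` for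
`t = 1, …, n`), let `w₂, …, wₙ` be positive integers and
`I = (x₁x₂^{w₂}, x₂x₃^{w₃}, …, x_{n-1}xₙ^{wₙ})`.  If for some `1 < i < n-1` one has
`wᵢ ≥ 2` and `wᵢ₊₁ = 1`, then `f = xᵢ₋₁ · xᵢ^{wᵢ} · xᵢ₊₁² · xᵢ₊₂^{wᵢ₊₂} ∉ I³`. -/
theorem statement_9 {n : ℕ} (k : Type*) [Field k] (w : ℕ → ℕ)
    (hwpos : ∀ t : ℕ, 2 ≤ t → t ≤ n → 1 ≤ w t)
    (i : ℕ) (hi1 : 1 < i) (hi2 : i < n - 1) :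
    (X ⟨i - 2, by omega⟩ * X ⟨i - 1, by omega⟩ ^ w i * X ⟨i, by omega⟩ ^ 2 *
        X ⟨i + 1, by omega⟩ ^ w (i + 2) : MvPolynomial (Fin n) k) ∉
      (Ideal.span {f : MvPolynomial (Fin n) k |
        ∃ j : ℕ, ∃ _ : 1 ≤ j, ∃ _ : j ≤ n - 1,
          f = X ⟨j - 1, by omega⟩ * X ⟨j, by omega⟩ ^ w (j + 1)}) ^ 3 := by
  obtain ⟨m, rfl⟩ : ∃ m, i = m + 2 := ⟨i - 2, by omega⟩
  let φ : (Fin n →₀ ℕ) →+ ℕ := Finsupp.weight fun t : Fin n => separatingWeight w m t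
  have hφ (a b : Fin n) (p : ℕ) :
      φ (Finsupp.single a 1 + Finsupp.single b p) =
        separatingWeight w m a + p * separatingWeight w m b := by
    simp [φ, Finsupp.weight_single]
  rw [X_mul_X_pow_eq_monomial, X_pow_eq_monomial, X_pow_eq_monomial, monomial_mul, monomial_mul,
    one_mul, one_mul]
  refine monomial_notMem_span_pow_of_weight φ (d := w (m + 2) * w (m + 4)) ?_ ?_
  · rintro _ ⟨j, hj, hjn, rfl⟩
    refine ⟨_, ?_, X_mul_X_pow_eq_monomial _ _ _⟩
    rw [hφ]
    exact le_separatingWeight_generator w m hj (hwpos _ (by omega) (by omega))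
  · simpa [φ, Finsupp.weight_single, add_assoc] using
      separatingWeight_lt w m (hwpos _ le_add_self (by omega)) (hwpos _ (by omega) (by omega))
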